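/- arXiv:2309.03754 — 2 statements merged into one kernel-verified Lean document; each statement's English description precedes it below -/
import Mathlib

section
/- Let f : R^d → R be L-smooth, let x, δ ∈ R^d, and let g ∈ R^d be a random vector with E[g] = ∇f(x + δ) and E[‖g − ∇f(x+δ)‖²] ≤ σ². Then for a stepsize η with 0 < η ≤ 1/(2L), E[f(x − η g)] ≤ f(x) − (η/2)‖∇f(x)‖² − (η/4)‖∇f(x+δ)‖² + L η² σ² + (η L²/2)‖δ‖². -/
open MeasureTheory
open scoped RealInnerProductSpace

/-!
An `L`-smooth function lies below its tangent paraboloid,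
`f y ≤ f x + ⟪∇f x, y - x⟫ + L/2 ‖y - x‖²`. Applied at `y = x - η g` and integrated, this bounds
`E f(x - η g)` by `f x - η ⟪∇f x, ∇f(x+δ)⟫ + Lη²/2 E‖g‖²`, and `E‖g‖² ≤ σ² + ‖∇f(x+δ)‖²` by the
bias–variance decomposition. Polarization
`2⟪a, b⟫ = ‖a‖² + ‖b‖² - ‖a - b‖²` with `‖∇f x - ∇f(x+δ)‖ ≤ L‖δ‖` turns the cross term into the
two squared gradient norms and the staleness penalty, and `Lη ≤ 1/2` absorbs `Lη²/2 ‖∇f(x+δ)‖²`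
into `η/4 ‖∇f(x+δ)‖²`.
-/

section Smooth

variable {E : Type*} [NormedAddCommGroup E] [InnerProductSpace ℝ E] [CompleteSpace E]
  {f : E → ℝ} {L : ℝ}

theorem hasDerivAt_comp_add_smul_of_differentiable (hf : Differentiable ℝ f) (x v : E) (t : ℝ) :
    HasDerivAt (fun s : ℝ => f (x + s • v)) ⟪gradient f (x + t • v), v⟫ t := by
  have hline : HasDerivAt (fun s : ℝ => x + s • v) v t := by
    simpa using ((hasDerivAt_id t).smul_const v).const_add x
  simpa [InnerProductSpace.toDual_apply_apply, Function.comp_def] using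
    (hf (x + t • v)).hasGradientAt.hasFDerivAt.comp_hasDerivAt t hline

theorem inner_gradient_add_smul_sub_le
    (hlip : ∀ x y, ‖gradient f x - gradient f y‖ ≤ L * ‖x - y‖) (x v : E) {t : ℝ} (ht : 0 ≤ t) :
    ⟪gradient f (x + t • v) - gradient f x, v⟫ ≤ L * t * ‖v‖ ^ 2 :=
  calc _ ≤ ‖gradient f (x + t • v) - gradient f x‖ * ‖v‖ := real_inner_le_norm _ _
    _ ≤ L * ‖t • v‖ * ‖v‖ := by gcongr; simpa using hlip (x + t • v) x
    _ = L * t * ‖v‖ ^ 2 := by rw [norm_smul, Real.norm_of_nonneg ht]; ring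

theorem le_add_inner_gradient_add_sq_of_lipschitz_gradient (hf : Differentiable ℝ f)
    (hlip : ∀ x y, ‖gradient f x - gradient f y‖ ≤ L * ‖x - y‖) (x y : E) :
    f y ≤ f x + ⟪gradient f x, y - x⟫ + L / 2 * ‖y - x‖ ^ 2 := by
  set v := y - x
  set φ : ℝ → ℝ := fun t => f (x + t • v) - t * ⟪gradient f x, v⟫ - L / 2 * t ^ 2 * ‖v‖ ^ 2
  have hφ : ∀ t, HasDerivAt φ
      (⟪gradient f (x + t • v) - gradient f x, v⟫ - L * t * ‖v‖ ^ 2) t := by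
    intro t
    refine (((hasDerivAt_comp_add_smul_of_differentiable hf x v t).sub
      ((hasDerivAt_id t).mul_const ⟪gradient f x, v⟫)).sub
      (((hasDerivAt_pow 2 t).const_mul (L / 2)).mul_const (‖v‖ ^ 2))).congr_deriv ?_
    simp only [inner_sub_left]
    ring
  have hanti : AntitoneOn φ (Set.Icc 0 1) := by
    refine antitoneOn_of_deriv_nonpos (convex_Icc 0 1)
      (fun t _ => (hφ t).continuousAt.continuousWithinAt)
      (fun t _ => (hφ t).differentiableAt.differentiableWithinAt) fun t ht => ?_
    rw [interior_Icc] at ht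
    rw [(hφ t).deriv]
    linarith [inner_gradient_add_smul_sub_le hlip x v ht.1.le]
  have h01 := hanti (Set.left_mem_Icc.2 zero_le_one) (Set.right_mem_Icc.2 zero_le_one)
    zero_le_one
  simp only [φ, v, one_smul, zero_smul, add_zero, add_sub_cancel, one_mul, zero_mul, one_pow,
    sub_zero, ne_eq, OfNat.ofNat_ne_zero, not_false_eq_true, zero_pow, mul_zero] at h01
  linarith

end Smooth

section Moments

variable {Ω E : Type*} [MeasurableSpace Ω] {μ : Measure Ω} [NormedAddCommGroup E]
  {g : Ω → E} {c : E}

theorem integrable_norm_sq_of_integrable_norm_sub_sq [IsFiniteMeasure μ]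
    (hg : AEStronglyMeasurable g μ) (h : Integrable (fun ω => ‖g ω - c‖ ^ 2) μ) :
    Integrable (fun ω => ‖g ω‖ ^ 2) μ := by
  have hc : MemLp (fun ω => g ω - c) 2 μ :=
    (memLp_two_iff_integrable_sq_norm (hg.sub aestronglyMeasurable_const)).2 h
  have hg2 : MemLp g 2 μ := by
    convert hc.add (memLp_const c) using 1
    ext ω
    simp
  exact (memLp_two_iff_integrable_sq_norm hg).1 hg2

variable [InnerProductSpace ℝ E] [CompleteSpace E]

theorem integral_norm_sq_eq_integral_norm_sub_sq_add [IsProbabilityMeasure μ]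
    (hg : Integrable g μ) (hmean : ∫ ω, g ω ∂μ = c)
    (h : Integrable (fun ω => ‖g ω - c‖ ^ 2) μ) :
    ∫ ω, ‖g ω‖ ^ 2 ∂μ = ∫ ω, ‖g ω - c‖ ^ 2 ∂μ + ‖c‖ ^ 2 := by
  have hcentered : Integrable (fun ω => g ω - c) μ := hg.sub (integrable_const c)
  have hcross : Integrable (fun ω => 2 * ⟪c, g ω - c⟫) μ :=
    (hcentered.const_inner c).const_mul 2
  have hsum : Integrable (fun ω => ‖g ω - c‖ ^ 2 + 2 * ⟪c, g ω - c⟫) μ := h.add hcross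
  have hcross_zero : ∫ ω, ⟪c, g ω - c⟫ ∂μ = 0 := by
    rw [integral_inner hcentered, integral_sub hg (integrable_const c), hmean,
      integral_const]
    simp
  calc ∫ ω, ‖g ω‖ ^ 2 ∂μ = ∫ ω, (‖g ω - c‖ ^ 2 + 2 * ⟪c, g ω - c⟫ + ‖c‖ ^ 2) ∂μ := by
        congr with ω
        rw [real_inner_comm, ← norm_add_sq_real, sub_add_cancel]
    _ = ∫ ω, ‖g ω - c‖ ^ 2 ∂μ + ‖c‖ ^ 2 := by
        rw [integral_add hsum (integrable_const _), integral_add h hcross,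
          integral_const_mul, hcross_zero]
        simp

theorem integral_comp_sub_smul_le_of_lipschitz_gradient [IsProbabilityMeasure μ] {f : E → ℝ}
    {L : ℝ} (hf : Differentiable ℝ f)
    (hlip : ∀ x y, ‖gradient f x - gradient f y‖ ≤ L * ‖x - y‖) (x : E) (η : ℝ)
    (hg : Integrable g μ) (hg_sq : Integrable (fun ω => ‖g ω‖ ^ 2) μ)
    (hf_int : Integrable (fun ω => f (x - η • g ω)) μ) :
    ∫ ω, f (x - η • g ω) ∂μ ≤
      f x - η * ⟪gradient f x, ∫ ω, g ω ∂μ⟫ + L / 2 * η ^ 2 * ∫ ω, ‖g ω‖ ^ 2 ∂μ := by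
  have hpointwise : ∀ ω, f (x - η • g ω) ≤
      f x - η * ⟪gradient f x, g ω⟫ + L / 2 * η ^ 2 * ‖g ω‖ ^ 2 := by
    intro ω
    have := le_add_inner_gradient_add_sq_of_lipschitz_gradient hf hlip x (x - η • g ω)
    rw [sub_sub_cancel_left, inner_neg_right, norm_neg, real_inner_smul_right, norm_smul,
      Real.norm_eq_abs, mul_pow, sq_abs] at this
    linarith
  have hlinear : Integrable (fun ω => f x - η * ⟪gradient f x, g ω⟫) μ :=
    (integrable_const _).sub ((hg.const_inner _).const_mul η)
  calc ∫ ω, f (x - η • g ω) ∂μ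
      ≤ ∫ ω, (f x - η * ⟪gradient f x, g ω⟫ + L / 2 * η ^ 2 * ‖g ω‖ ^ 2) ∂μ :=
        integral_mono hf_int (hlinear.add (hg_sq.const_mul _)) hpointwise
    _ = _ := by
        rw [integral_add hlinear (hg_sq.const_mul _),
          integral_sub (integrable_const _) ((hg.const_inner _).const_mul η),
          integral_const, integral_const_mul, integral_const_mul, integral_inner hg]
        simp

end Moments

theorem descent_lemma (d : ℕ) (f : EuclideanSpace ℝ (Fin d) → ℝ) (L σ η : ℝ)
    (hL : 0 < L) (hdiff : Differentiable ℝ f)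
    (hlip : ∀ x y, ‖gradient f x - gradient f y‖ ≤ L * ‖x - y‖)
    {Ω : Type*} [MeasurableSpace Ω] (μ : Measure Ω) [IsProbabilityMeasure μ]
    (g : Ω → EuclideanSpace ℝ (Fin d)) (x δ : EuclideanSpace ℝ (Fin d))
    (hg_int : Integrable g μ)
    (hg_sq_int : Integrable (fun ω => ‖g ω - gradient f (x + δ)‖ ^ 2) μ)
    (hf_int : Integrable (fun ω => f (x - η • g ω)) μ)
    (hmean : ∫ ω, g ω ∂μ = gradient f (x + δ))
    (hvar : ∫ ω, ‖g ω - gradient f (x + δ)‖ ^ 2 ∂μ ≤ σ ^ 2)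
    (hη : 0 < η) (hη2 : η ≤ 1 / (2 * L)) :
    ∫ ω, f (x - η • g ω) ∂μ ≤
      f x - (η / 2) * ‖gradient f x‖ ^ 2 - (η / 4) * ‖gradient f (x + δ)‖ ^ 2
        + L * η ^ 2 * σ ^ 2 + (η * L ^ 2 / 2) * ‖δ‖ ^ 2 := by
  set G := gradient f x
  set c := gradient f (x + δ)
  have hstep := integral_comp_sub_smul_le_of_lipschitz_gradient hdiff hlip x η hg_int
    (integrable_norm_sq_of_integrable_norm_sub_sq hg_int.aestronglyMeasurable hg_sq_int) hf_int
  rw [hmean, integral_norm_sq_eq_integral_norm_sub_sq_add hg_int hmean hg_sq_int] at hstep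
  have hcross : η * ⟪G, c⟫ = η / 2 * (‖G‖ ^ 2 + ‖c‖ ^ 2 - ‖G - c‖ ^ 2) := by
    rw [norm_sub_sq_real]
    ring
  have hstale : η / 2 * ‖G - c‖ ^ 2 ≤ η / 2 * (L ^ 2 * ‖δ‖ ^ 2) := by
    rw [← mul_pow]
    gcongr
    simpa using hlip x (x + δ)
  have hLη : L * η ≤ 1 / 2 := by
    rw [le_div_iff₀ (by positivity)] at hη2
    linarith
  have hbias : L / 2 * η ^ 2 * ‖c‖ ^ 2 ≤ η / 4 * ‖c‖ ^ 2 := by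
    have := mul_le_mul_of_nonneg_left hLη (by positivity : 0 ≤ η / 2 * ‖c‖ ^ 2)
    linarith
  have hnoise : L / 2 * η ^ 2 * ∫ ω, ‖g ω - c‖ ^ 2 ∂μ ≤ L * η ^ 2 * σ ^ 2 := by
    have : 0 ≤ L * η ^ 2 * σ ^ 2 := by positivity
    have : L / 2 * η ^ 2 * ∫ ω, ‖g ω - c‖ ^ 2 ∂μ ≤ L / 2 * η ^ 2 * σ ^ 2 := by gcongr
    linarith
  linarith
end

section
/- Suppose for each t = 0,...,T we have (1/2)·G_t ≤ (F_t − F_{t+1})/η + L η σ² + (L²/2)·D_t, where G_t, D_t ≥ 0, F_{T+1} ≥ f*, F_0 − f* = r_0, and additionally (1/(T+1))·∑_{t=0}^T D_t ≤ (1/(7L²(T+1)))·∑_{t=0}^T G_t + 2ησ²/(7L). Then (1/(T+1))·∑_{t=0}^T G_t ≤ (7 r_0)/(3η(T+1)) + (14/3)·L η σ². -/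
theorem convergence_combine (T : ℕ) (F G D : ℕ → ℝ) (L η σ fstar r0 : ℝ)
    (hη : 0 < η) (hL : 0 < L) (hσ : 0 ≤ σ)
    (hG : ∀ t, 0 ≤ G t) (hD : ∀ t, 0 ≤ D t)
    (hdesc : ∀ t ≤ T, (1 / 2 : ℝ) * G t ≤ (F t - F (t + 1)) / η + L * η * σ ^ 2 + (L ^ 2 / 2) * D t)
    (hFlast : F (T + 1) ≥ fstar) (hr0 : F 0 - fstar = r0)
    (hres : (1 / (T + 1 : ℝ)) * ∑ t ∈ Finset.range (T + 1), D t ≤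
        (1 / (7 * L ^ 2 * (T + 1 : ℝ))) * ∑ t ∈ Finset.range (T + 1), G t + 2 * η * σ ^ 2 / (7 * L)) :
    (1 / (T + 1 : ℝ)) * ∑ t ∈ Finset.range (T + 1), G t ≤
      7 * r0 / (3 * η * (T + 1 : ℝ)) + (14 / 3) * L * η * σ ^ 2 := by
  set SG := ∑ t ∈ Finset.range (T + 1), G t with hSG
  set SD := ∑ t ∈ Finset.range (T + 1), D t with hSD
  have hT : (0 : ℝ) < (T + 1 : ℝ) := by positivity
  have hsum : (1 / 2 : ℝ) * SG ≤
      (F 0 - F (T + 1)) / η + (T + 1 : ℝ) * (L * η * σ ^ 2) + (L ^ 2 / 2) * SD := by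
    have h1 : (1 / 2 : ℝ) * SG ≤
        ∑ t ∈ Finset.range (T + 1),
          ((F t - F (t + 1)) / η + L * η * σ ^ 2 + (L ^ 2 / 2) * D t) := by
      rw [hSG, Finset.mul_sum]
      refine Finset.sum_le_sum fun t ht => ?_
      exact hdesc t (Nat.lt_succ_iff.mp (Finset.mem_range.mp ht))
    have h3 : ∑ t ∈ Finset.range (T + 1), (F t - F (t + 1)) / η
        = (F 0 - F (T + 1)) / η := by
      rw [← Finset.sum_div, Finset.sum_range_sub' F]
    have h2 : ∑ t ∈ Finset.range (T + 1),
          ((F t - F (t + 1)) / η + L * η * σ ^ 2 + (L ^ 2 / 2) * D t)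
        = (F 0 - F (T + 1)) / η + (T + 1 : ℝ) * (L * η * σ ^ 2) + (L ^ 2 / 2) * SD := by
      rw [hSD, Finset.mul_sum, Finset.sum_add_distrib, Finset.sum_add_distrib, h3,
        Finset.sum_const, Finset.card_range, nsmul_eq_mul]
      push_cast
      ring
    linarith [h1, h2.le]
  have hres' : SD ≤ (1 / (7 * L ^ 2)) * SG + 2 * η * σ ^ 2 * (T + 1 : ℝ) / (7 * L) := by
    have key := mul_le_mul_of_nonneg_left hres hT.le
    have e1 : (T + 1 : ℝ) * ((1 / (T + 1 : ℝ)) * SD) = SD := by field_simp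
    have e2 : (T + 1 : ℝ) * ((1 / (7 * L ^ 2 * (T + 1 : ℝ))) * SG + 2 * η * σ ^ 2 / (7 * L))
        = (1 / (7 * L ^ 2)) * SG + 2 * η * σ ^ 2 * (T + 1 : ℝ) / (7 * L) := by
      field_simp
    rw [e1, e2] at key
    exact key
  have hSGle : SG ≤ (7 / 3) * r0 / η + (8 / 3) * (T + 1 : ℝ) * L * η * σ ^ 2 := by
    have key := mul_le_mul_of_nonneg_left hres' (by positivity : (0:ℝ) ≤ L ^ 2 / 2)
    have hr : F 0 - F (T + 1) ≤ r0 := by linarith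
    have hdiv : (F 0 - F (T + 1)) / η ≤ r0 / η := by gcongr
    have h14 : (L ^ 2 / 2) * ((1 / (7 * L ^ 2)) * SG) = SG / 14 := by
      field_simp; ring
    have h7 : (L ^ 2 / 2) * (2 * η * σ ^ 2 * (T + 1 : ℝ) / (7 * L)) =
        L * η * σ ^ 2 * (T + 1 : ℝ) / 7 := by
      field_simp
    rw [mul_add, h14, h7] at key
    have e3 : 7 / 3 * r0 / η = (7 / 3) * (r0 / η) := by ring
    nlinarith [key, hsum, hdiv, hr, e3]
  rw [one_div, inv_mul_le_iff₀ hT]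
  have expand : ((T : ℝ) + 1) * (7 * r0 / (3 * η * (T + 1 : ℝ)) + 14 / 3 * L * η * σ ^ 2)
      = 7 * r0 / (3 * η) + 14 / 3 * L * η * σ ^ 2 * ((T : ℝ) + 1) := by
    field_simp
  rw [expand]
  have hr0' : (7 / 3 : ℝ) * r0 / η = 7 * r0 / (3 * η) := by ring
  nlinarith [hSGle, hη.le, hσ, hL.le, mul_nonneg (mul_nonneg hL.le hη.le) (sq_nonneg σ),
    Nat.cast_nonneg (α := ℝ) T]
end
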